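/- arXiv:1302.2567 — 2 statements merged into one kernel-verified Lean document; each statement's English description precedes it below -/
import Mathlib

section
/- Let B > 0 and let f ∈ L²([0,B]). If ∫₀^B max(x−ξ,0)·f(x) dx = 0 for every ξ ∈ [0,B], then f = 0 almost everywhere on [0,B]. In other words, the restricted call operator γ is injective (its null space is trivial), and similarly the null spaces of γ*, γ*γ and γγ* reduce to {0}. -/
/-!
For `ξ ∈ [a, b]` one has `γ* f ξ = ξ F ξ - G ξ`, where `F` and `G` are the primitives from `a` of
`f` and of `x ↦ x f x`. At a Lebesgue point the derivative of this is `F ξ + ξ f ξ - ξ f ξ = F ξ`,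
so if `γ* f` is affine on `[a, b]` then `F` is constant there, and differentiating once more gives
`f = 0` a.e. Since `max (x - ξ) 0 - max (ξ - x) 0 = x - ξ`, `γ f = 0` also makes `γ* f` affine.
Finally `γ f` and `γ* f` are continuous, so `γ* (γ f) = 0` or `γ (γ* f) = 0` forces them to vanish
identically on `[a, b]`.
-/

open MeasureTheory Set Filter Topology Interval

noncomputable section

/-- `γ` in the paper, on `[a, b]`. -/
def restrictedCall (a b : ℝ) (f : ℝ → ℝ) (ξ : ℝ) : ℝ :=
  ∫ x in a..b, max (x - ξ) 0 * f x

/-- `γ*` in the paper, on `[a, b]`. -/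
def restrictedPut (a b : ℝ) (f : ℝ → ℝ) (ξ : ℝ) : ℝ :=
  ∫ x in a..b, max (ξ - x) 0 * f x

end

lemma HasDerivAt.eq_zero_of_eventuallyEq_const {g : ℝ → ℝ} {g' x k : ℝ} (hg : HasDerivAt g g' x)
    (h : g =ᶠ[𝓝 x] fun _ => k) : g' = 0 :=
  hg.unique ((hasDerivAt_const x k).congr_of_eventuallyEq h)

section Interval

variable {a b c d ξ : ℝ} {f : ℝ → ℝ}

lemma ae_restrict_Icc_mem_Ioo : ∀ᵐ x ∂volume.restrict (Icc a b), x ∈ Ioo a b := by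
  rw [Measure.restrict_congr_set Ioo_ae_eq_Icc.symm]
  exact ae_restrict_mem measurableSet_Ioo

lemma eqOn_Icc_of_ae_restrict_eq (hab : a < b) {g h : ℝ → ℝ} (hg : ContinuousOn g (Icc a b))
    (hh : ContinuousOn h (Icc a b)) (hgh : g =ᵐ[volume.restrict (Icc a b)] h) :
    EqOn g h (Icc a b) :=
  Measure.eqOn_of_ae_eq hgh hg hh (by rw [interior_Icc, closure_Ioo hab.ne])

lemma restrictedPut_eq (hf : IntervalIntegrable f volume a b) (hξ : ξ ∈ Icc a b) :
    restrictedPut a b f ξ = ξ * (∫ x in a..ξ, f x) - ∫ x in a..ξ, x * f x := by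
  have hξ' : ξ ∈ [[a, b]] := by rwa [uIcc_of_le (hξ.1.trans hξ.2)]
  have hfξ : IntervalIntegrable f volume a ξ := hf.mono_set (uIcc_subset_uIcc left_mem_uIcc hξ')
  have hxfξ : IntervalIntegrable (fun x => x * f x) volume a ξ :=
    hfξ.continuousOn_mul continuousOn_id
  have hkernel : IntervalIntegrable (fun x => max (ξ - x) 0 * f x) volume a b :=
    hf.continuousOn_mul (by fun_prop)
  have hright : ∫ x in ξ..b, max (ξ - x) 0 * f x = 0 := by
    refine (intervalIntegral.integral_congr fun x hx => ?_).trans intervalIntegral.integral_zero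
    rw [uIcc_of_le hξ.2] at hx
    simp [hx.1]
  have hleft : ∫ x in a..ξ, max (ξ - x) 0 * f x = ∫ x in a..ξ, ξ * f x - x * f x := by
    refine intervalIntegral.integral_congr fun x hx => ?_
    rw [uIcc_of_le hξ.1] at hx
    rw [max_eq_left (sub_nonneg.2 hx.2)]
    ring
  rw [restrictedPut, ← intervalIntegral.integral_add_adjacent_intervals
    (hkernel.mono_set (uIcc_subset_uIcc left_mem_uIcc hξ'))
    (hkernel.mono_set (uIcc_subset_uIcc hξ' right_mem_uIcc)), hright, add_zero, hleft,
    intervalIntegral.integral_sub (hfξ.const_mul ξ) hxfξ, intervalIntegral.integral_const_mul]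

lemma restrictedCall_eq (hf : IntervalIntegrable f volume a b) (ξ : ℝ) :
    restrictedCall a b f ξ =
      restrictedPut a b f ξ + ((∫ x in a..b, x * f x) - ξ * ∫ x in a..b, f x) := by
  have hkernel : IntervalIntegrable (fun x => max (ξ - x) 0 * f x) volume a b :=
    hf.continuousOn_mul (by fun_prop)
  have hxf : IntervalIntegrable (fun x => x * f x) volume a b :=
    hf.continuousOn_mul continuousOn_id
  rw [restrictedCall, restrictedPut, ← intervalIntegral.integral_const_mul,
    ← intervalIntegral.integral_sub hxf (hf.const_mul ξ),
    ← intervalIntegral.integral_add hkernel (hxf.sub (hf.const_mul ξ))]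
  refine intervalIntegral.integral_congr fun x _ => ?_
  have hmax := max_zero_sub_max_neg_zero_eq_self (x - ξ)
  rw [neg_sub] at hmax
  linear_combination f x * hmax

lemma primitive_eqOn_const_of_restrictedPut_eq_affine (hab : a < b)
    (hf : IntervalIntegrable f volume a b)
    (h : ∀ ξ ∈ Icc a b, restrictedPut a b f ξ = c * ξ + d) :
    ∀ ξ ∈ Icc a b, ∫ x in a..ξ, f x = c := by
  have hxf : IntervalIntegrable (fun x => x * f x) volume a b :=
    hf.continuousOn_mul continuousOn_id
  have hae : (fun ξ => ∫ x in a..ξ, f x) =ᵐ[volume.restrict (Icc a b)] fun _ => c := by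
    filter_upwards [ae_restrict_Icc_mem_Ioo, ae_restrict_of_ae hf.ae_hasDerivAt_integral,
      ae_restrict_of_ae hxf.ae_hasDerivAt_integral] with x hx hF hG
    have hxI : x ∈ [[a, b]] := by rw [uIcc_of_le hab.le]; exact Ioo_subset_Icc_self hx
    have hderiv := (((hasDerivAt_id x).mul (hF hxI a left_mem_uIcc)).sub
      (hG hxI a left_mem_uIcc)).sub ((hasDerivAt_id x).const_mul c)
    have hzero : (fun ξ => ξ * (∫ t in a..ξ, f t) - (∫ t in a..ξ, t * f t) - c * ξ)
        =ᶠ[𝓝 x] fun _ => d := by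
      filter_upwards [Ioo_mem_nhds hx.1 hx.2] with ξ hξ
      rw [← restrictedPut_eq hf (Ioo_subset_Icc_self hξ), h ξ (Ioo_subset_Icc_self hξ)]
      ring
    have := hderiv.eq_zero_of_eventuallyEq_const hzero
    simp only [id, one_mul, mul_one] at this
    linarith
  have hcont : ContinuousOn (fun ξ => ∫ x in a..ξ, f x) (Icc a b) := by
    rw [← uIcc_of_le hab.le]
    exact intervalIntegral.continuousOn_primitive_interval' hf left_mem_uIcc
  exact eqOn_Icc_of_ae_restrict_eq hab hcont continuousOn_const hae

lemma ae_eq_zero_of_primitive_eqOn_const (hf : IntervalIntegrable f volume a b)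
    (h : ∀ ξ ∈ Icc a b, ∫ x in a..ξ, f x = c) : f =ᵐ[volume.restrict (Icc a b)] 0 := by
  filter_upwards [ae_restrict_Icc_mem_Ioo, ae_restrict_of_ae hf.ae_hasDerivAt_integral]
    with x hx hF
  have hxI : x ∈ [[a, b]] := by rw [uIcc_of_le (hx.1.trans hx.2).le]; exact Ioo_subset_Icc_self hx
  refine (hF hxI a left_mem_uIcc).eq_zero_of_eventuallyEq_const (k := c) ?_
  filter_upwards [Ioo_mem_nhds hx.1 hx.2] with ξ hξ using h ξ (Ioo_subset_Icc_self hξ)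

lemma ae_eq_zero_of_restrictedPut_eqOn_zero (hab : a < b) (hf : IntervalIntegrable f volume a b)
    (h : ∀ ξ ∈ Icc a b, restrictedPut a b f ξ = 0) : f =ᵐ[volume.restrict (Icc a b)] 0 :=
  ae_eq_zero_of_primitive_eqOn_const hf <|
    primitive_eqOn_const_of_restrictedPut_eq_affine hab hf (c := 0) (d := 0) fun ξ hξ => by
      simp [h ξ hξ]

lemma ae_eq_zero_of_restrictedCall_eqOn_zero (hab : a < b) (hf : IntervalIntegrable f volume a b)
    (h : ∀ ξ ∈ Icc a b, restrictedCall a b f ξ = 0) : f =ᵐ[volume.restrict (Icc a b)] 0 :=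
  ae_eq_zero_of_primitive_eqOn_const hf <|
    primitive_eqOn_const_of_restrictedPut_eq_affine hab hf
      (c := ∫ x in a..b, f x) (d := -∫ x in a..b, x * f x) fun ξ hξ => by
      have := restrictedCall_eq hf ξ
      rw [h ξ hξ] at this
      linear_combination -this

lemma continuousOn_restrictedPut (hab : a ≤ b) (hf : IntervalIntegrable f volume a b) :
    ContinuousOn (restrictedPut a b f) (Icc a b) := by
  have hprim {g : ℝ → ℝ} (hg : IntervalIntegrable g volume a b) :
      ContinuousOn (fun ξ => ∫ x in a..ξ, g x) (Icc a b) := by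
    rw [← uIcc_of_le hab]
    exact intervalIntegral.continuousOn_primitive_interval' hg left_mem_uIcc
  refine ContinuousOn.congr ?_ fun ξ hξ => restrictedPut_eq hf hξ
  exact (continuousOn_id.mul (hprim hf)).sub (hprim (hf.continuousOn_mul continuousOn_id))

lemma continuousOn_restrictedCall (hab : a ≤ b) (hf : IntervalIntegrable f volume a b) :
    ContinuousOn (restrictedCall a b f) (Icc a b) := by
  refine ContinuousOn.congr ?_ fun ξ _ => restrictedCall_eq hf ξ
  exact (continuousOn_restrictedPut hab hf).add (by fun_prop)

lemma eqOn_zero_of_restrictedPut_eqOn_zero {g : ℝ → ℝ} (hab : a < b)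
    (hg : ContinuousOn g (Icc a b)) (h : ∀ ξ ∈ Icc a b, restrictedPut a b g ξ = 0) :
    EqOn g 0 (Icc a b) := by
  have hgi : IntervalIntegrable g volume a b :=
    (uIcc_of_le hab.le ▸ hg).intervalIntegrable
  exact eqOn_Icc_of_ae_restrict_eq hab hg continuousOn_const
    (ae_eq_zero_of_restrictedPut_eqOn_zero hab hgi h)

lemma eqOn_zero_of_restrictedCall_eqOn_zero {g : ℝ → ℝ} (hab : a < b)
    (hg : ContinuousOn g (Icc a b)) (h : ∀ ξ ∈ Icc a b, restrictedCall a b g ξ = 0) :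
    EqOn g 0 (Icc a b) := by
  have hgi : IntervalIntegrable g volume a b :=
    (uIcc_of_le hab.le ▸ hg).intervalIntegrable
  exact eqOn_Icc_of_ae_restrict_eq hab hg continuousOn_const
    (ae_eq_zero_of_restrictedCall_eqOn_zero hab hgi h)

end Interval

/-- If `f ∈ L²([0,B])` and `(γ f)(ξ) = 0` for every `ξ ∈ [0,B]`,
then `f = 0` a.e. on `[0,B]`: the null space of the restricted call operator `γ`
is trivial, and similarly for `γ*`, `γ*γ` and `γγ*`. -/
theorem stmt_9 (B : ℝ) (hB : 0 < B) (f : ℝ → ℝ)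
    (hf : MemLp f 2 (volume.restrict (Icc (0:ℝ) B))) :
    ((∀ ξ ∈ Icc (0:ℝ) B, (∫ x in (0:ℝ)..B, max (x - ξ) 0 * f x) = 0) →
      f =ᵐ[volume.restrict (Icc (0:ℝ) B)] 0) ∧
    ((∀ ξ ∈ Icc (0:ℝ) B, (∫ x in (0:ℝ)..B, max (ξ - x) 0 * f x) = 0) →
      f =ᵐ[volume.restrict (Icc (0:ℝ) B)] 0) ∧
    ((∀ ξ ∈ Icc (0:ℝ) B,
        (∫ u in (0:ℝ)..B, max (ξ - u) 0 * ∫ x in (0:ℝ)..B, max (x - u) 0 * f x) = 0) →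
      f =ᵐ[volume.restrict (Icc (0:ℝ) B)] 0) ∧
    ((∀ ξ ∈ Icc (0:ℝ) B,
        (∫ u in (0:ℝ)..B, max (u - ξ) 0 * ∫ x in (0:ℝ)..B, max (u - x) 0 * f x) = 0) →
      f =ᵐ[volume.restrict (Icc (0:ℝ) B)] 0) := by
  have hfi : IntervalIntegrable f volume 0 B :=
    IntegrableOn.intervalIntegrable (by rw [uIcc_of_le hB.le]; exact hf.integrable one_le_two)
  refine ⟨ae_eq_zero_of_restrictedCall_eqOn_zero hB hfi,
    ae_eq_zero_of_restrictedPut_eqOn_zero hB hfi, fun h => ?_, fun h => ?_⟩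
  · exact ae_eq_zero_of_restrictedCall_eqOn_zero hB hfi <| eqOn_zero_of_restrictedPut_eqOn_zero hB
      (continuousOn_restrictedCall hB.le hfi) h
  · exact ae_eq_zero_of_restrictedPut_eqOn_zero hB hfi <| eqOn_zero_of_restrictedCall_eqOn_zero hB
      (continuousOn_restrictedPut hB.le hfi) h
end

section
/- Let B > 0, let ε ∈ {−1,+1}, and let ρ > 0 satisfy cos ρ ≠ 0 and e^{ρ} = −(1 + ε·sin ρ)/cos ρ. Define a₁ = (1/√B)·ε/(e^{ρ}+ε), a₂ = (1/√B)·1/(1+ε·e^{−ρ}), a₃ = −1/√B, a₄ = (1/√B)·(1−ε·e^{−ρ})/(1+ε·e^{−ρ}), and set φ(ξ) = a₁e^{ρξ/B} + a₂e^{−ρξ/B} + a₃cos(ρξ/B) + a₄sin(ρξ/B) and ψ(ξ) = a₁e^{ρξ/B} + a₂e^{−ρξ/B} − a₃cos(ρξ/B) − a₄sin(ρξ/B). Then for every ξ ∈ [0,B], ∫₀^B max(ξ−x,0)·ψ(x) dx = (B/ρ)²·φ(ξ); consequently φ is an eigenvector of γ*γ with eigenvalue (B/ρ)⁴: ∫₀^B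 max(ξ−u,0)·( ∫₀^B max(x−u,0)·φ(x) dx ) du = (B/ρ)⁴·φ(ξ) for all ξ ∈ [0,B]. -/
/-!
With `c = ρ / B`, both `φ` and `ψ` are combinations of `e^{±cx}, cos cx, sin cx`, and
`φ'' = c² ψ`, `ψ'' = c² φ`. Integrating by parts twice against the kernels,
`γ* ψ (ξ) = c⁻² (φ ξ - φ 0 - ξ φ' 0)` and `γ φ (u) = c⁻² (ψ u - ψ B + (B - u) ψ' B)`.
The normalisation of `a₁, …, a₄` gives `φ 0 = φ' 0 = 0`, and the equation
`e^ρ cos ρ = -(1 + ε sin ρ)` gives `ψ B = ψ' B = 0`, so `γ* ψ = c⁻² φ` and `γ φ = c⁻² ψ`,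
whence `γ* γ φ = c⁻⁴ φ`.
-/

open Real MeasureTheory Set

section Kernels

variable {f F F' : ℝ → ℝ}

theorem integral_sub_mul_eq_of_hasDerivAt (t a b : ℝ)
    (hF : ∀ x, HasDerivAt F (F' x) x) (hF' : ∀ x, HasDerivAt F' (f x) x) (hf : Continuous f) :
    ∫ x in a..b, (t - x) * f x = ((t - b) * F' b + F b) - ((t - a) * F' a + F a) := by
  refine intervalIntegral.integral_eq_sub_of_hasDerivAt (f := fun x => (t - x) * F' x + F x)
    (fun x _ => ?_) ((by fun_prop : Continuous fun x => (t - x) * f x).intervalIntegrable _ _)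
  refine ((((hasDerivAt_id x).const_sub t).mul (hF' x)).add (hF x)).congr_deriv ?_
  simp only [id]
  ring

theorem put_integral_eq_of_hasDerivAt {a b ξ : ℝ}
    (hF : ∀ x, HasDerivAt F (F' x) x) (hF' : ∀ x, HasDerivAt F' (f x) x) (hf : Continuous f)
    (hξ : ξ ∈ Icc a b) :
    ∫ x in a..b, max (ξ - x) 0 * f x = F ξ - F a - (ξ - a) * F' a := by
  have hint : ∀ c d, IntervalIntegrable (fun x => max (ξ - x) 0 * f x) volume c d := fun _ _ =>
    (((continuous_const.sub continuous_id).max continuous_const).mul hf).intervalIntegrable _ _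
  rw [← intervalIntegral.integral_add_adjacent_intervals (hint a ξ) (hint ξ b)]
  have h_left : ∫ x in a..ξ, max (ξ - x) 0 * f x = ∫ x in a..ξ, (ξ - x) * f x :=
    intervalIntegral.integral_congr fun x hx => by
      rw [uIcc_of_le hξ.1] at hx
      simp only [max_eq_left (sub_nonneg.2 hx.2)]
  have h_right : ∫ x in ξ..b, max (ξ - x) 0 * f x = 0 := by
    rw [intervalIntegral.integral_congr (g := fun _ => 0) fun x hx => ?_]
    · simp
    rw [uIcc_of_le hξ.2] at hx
    simp [max_eq_right (sub_nonpos.2 hx.1)]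
  rw [h_left, h_right, integral_sub_mul_eq_of_hasDerivAt ξ a ξ hF hF' hf]
  ring

theorem call_integral_eq_of_hasDerivAt {a b u : ℝ}
    (hF : ∀ x, HasDerivAt F (F' x) x) (hF' : ∀ x, HasDerivAt F' (f x) x) (hf : Continuous f)
    (hu : u ∈ Icc a b) :
    ∫ x in a..b, max (x - u) 0 * f x = F u - F b + (b - u) * F' b := by
  have hint : ∀ c d, IntervalIntegrable (fun x => max (x - u) 0 * f x) volume c d := fun _ _ =>
    (((continuous_id.sub continuous_const).max continuous_const).mul hf).intervalIntegrable _ _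
  rw [← intervalIntegral.integral_add_adjacent_intervals (hint a u) (hint u b)]
  have h_left : ∫ x in a..u, max (x - u) 0 * f x = 0 := by
    rw [intervalIntegral.integral_congr (g := fun _ => 0) fun x hx => ?_]
    · simp
    rw [uIcc_of_le hu.1] at hx
    simp [max_eq_right (sub_nonpos.2 hx.2)]
  have h_right : ∫ x in u..b, max (x - u) 0 * f x = ∫ x in u..b, -((u - x) * f x) :=
    intervalIntegral.integral_congr fun x hx => by
      rw [uIcc_of_le hu.2] at hx
      simp only [max_eq_left (sub_nonneg.2 hx.1)]
      ring
  rw [h_left, h_right, intervalIntegral.integral_neg,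
    integral_sub_mul_eq_of_hasDerivAt u u b hF hF' hf]
  ring

theorem integral_kernel_comp_eq_sq_mul {K : ℝ → ℝ → ℝ} {f g : ℝ → ℝ} {a b μ ξ : ℝ}
    (hab : a ≤ b) (hfg : ∀ u ∈ Icc a b, ∫ x in a..b, K x u * f x = μ * g u)
    (hgf : ∀ ξ ∈ Icc a b, ∫ x in a..b, K ξ x * g x = μ * f ξ) (hξ : ξ ∈ Icc a b) :
    ∫ u in a..b, K ξ u * ∫ x in a..b, K x u * f x = μ ^ 2 * f ξ := by
  rw [intervalIntegral.integral_congr (g := fun u => μ * (K ξ u * g u)) fun u hu => ?_,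
    intervalIntegral.integral_const_mul, hgf ξ hξ]
  · ring
  rw [uIcc_of_le hab] at hu
  simp only [hfg u hu]
  ring

end Kernels

noncomputable def expTrig (c p q r s x : ℝ) : ℝ :=
  p * exp (c * x) + q * exp (-(c * x)) + r * cos (c * x) + s * sin (c * x)

section expTrig

variable {c : ℝ} (p q r s : ℝ)

theorem hasDerivAt_expTrig (x : ℝ) :
    HasDerivAt (expTrig c p q r s) (c * expTrig c p (-q) s (-r) x) x := by
  have hcx : HasDerivAt (fun y => c * y) c x := by simpa using (hasDerivAt_id x).const_mul c
  refine ((((hcx.exp.const_mul p).add (hcx.neg.exp.const_mul q)).add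
    (hcx.cos.const_mul r)).add (hcx.sin.const_mul s)).congr_deriv ?_
  simp only [expTrig, Pi.neg_apply]
  ring

theorem continuous_expTrig : Continuous (expTrig c p q r s) := by
  unfold expTrig
  fun_prop

theorem expTrig_zero : expTrig c p q r s 0 = p + q + r := by
  simp [expTrig]

theorem hasDerivAt_expTrig_div_sq (hc : c ≠ 0) (x : ℝ) :
    HasDerivAt (fun y => expTrig c p q r s y / c ^ 2) (expTrig c p (-q) s (-r) x / c) x :=
  ((hasDerivAt_expTrig (c := c) p q r s x).div_const _).congr_deriv (by field_simp)

theorem hasDerivAt_expTrig_div (hc : c ≠ 0) (x : ℝ) :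
    HasDerivAt (fun y => expTrig c p (-q) s (-r) y / c) (expTrig c p q (-r) (-s) x) x := by
  simpa [hc] using (hasDerivAt_expTrig (c := c) p (-q) s (-r) x).div_const c

theorem put_integral_expTrig {a b ξ : ℝ} (hc : c ≠ 0) (hξ : ξ ∈ Icc a b) :
    ∫ x in a..b, max (ξ - x) 0 * expTrig c p q (-r) (-s) x
      = (expTrig c p q r s ξ - expTrig c p q r s a
          - (ξ - a) * c * expTrig c p (-q) s (-r) a) / c ^ 2 := by
  rw [put_integral_eq_of_hasDerivAt (hasDerivAt_expTrig_div_sq p q r s hc)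
    (hasDerivAt_expTrig_div p q r s hc) (continuous_expTrig ..) hξ]
  field_simp

theorem call_integral_expTrig {a b u : ℝ} (hc : c ≠ 0) (hu : u ∈ Icc a b) :
    ∫ x in a..b, max (x - u) 0 * expTrig c p q (-r) (-s) x
      = (expTrig c p q r s u - expTrig c p q r s b
          + (b - u) * c * expTrig c p (-q) s (-r) b) / c ^ 2 := by
  rw [call_integral_eq_of_hasDerivAt (hasDerivAt_expTrig_div_sq p q r s hc)
    (hasDerivAt_expTrig_div p q r s hc) (continuous_expTrig ..) hu]
  field_simp

end expTrig

/-- With `φ = expTrig (ρ / B) a₁ a₂ a₃ a₄` and `ψ = expTrig (ρ / B) a₁ a₂ (-a₃) (-a₄)`, these are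
`φ 0 = 0`, `φ' 0 = 0`, `ψ B = 0` and `ψ' B = 0`. -/
theorem boundary_relations {k ε ρ a₁ a₂ a₃ a₄ : ℝ} (hε : ε = 1 ∨ ε = -1) (hρ : 0 < ρ)
    (hcos : cos ρ ≠ 0) (hfix : exp ρ = -(1 + ε * sin ρ) / cos ρ)
    (ha₁ : a₁ = k * (ε / (exp ρ + ε)))
    (ha₂ : a₂ = k * (1 / (1 + ε * exp (-ρ))))
    (ha₃ : a₃ = -k)
    (ha₄ : a₄ = k * ((1 - ε * exp (-ρ)) / (1 + ε * exp (-ρ)))) :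
    a₁ + a₂ + a₃ = 0 ∧ a₁ + -a₂ + a₄ = 0 ∧
      a₁ * exp ρ + a₂ * exp (-ρ) + -a₃ * cos ρ + -a₄ * sin ρ = 0 ∧
      a₁ * exp ρ + -a₂ * exp (-ρ) + -a₄ * cos ρ + a₃ * sin ρ = 0 := by
  have hε2 : ε ^ 2 = 1 := by rcases hε with rfl | rfl <;> norm_num
  have hE : exp ρ + ε ≠ 0 := by
    have := one_lt_exp_iff.2 hρ
    rcases hε with rfl | rfl <;> linarith
  have hP : exp ρ * cos ρ = -(1 + ε * sin ρ) := by rw [hfix]; field_simp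
  have hK : (ε * exp ρ + 1) + (exp ρ + ε) * cos ρ - (exp ρ - ε) * sin ρ = 0 := by
    refine (mul_eq_zero.1 ?_).resolve_right hcos
    linear_combination (ε + cos ρ - sin ρ) * hP + ε * sin_sq_add_cos_sq ρ - sin ρ * hε2
  have hL : (ε * exp ρ - 1) - (exp ρ + ε) * sin ρ - (exp ρ - ε) * cos ρ = 0 := by
    refine (mul_eq_zero.1 ?_).resolve_right hcos
    linear_combination (ε - sin ρ - cos ρ) * hP + ε * sin_sq_add_cos_sq ρ - sin ρ * hε2
  subst ha₁ ha₂ ha₃ ha₄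
  rw [exp_neg]
  refine ⟨?_, ?_, ?_, ?_⟩ <;> field_simp
  · ring
  · ring
  · linear_combination k * hK
  · linear_combination k * hL

/-- With `ε ∈ {−1,+1}`, `ρ > 0`, `cos ρ ≠ 0`,
`e^ρ = −(1 + ε sin ρ)/cos ρ`, and `a₁,…,a₄`, `φ, ψ` as in the paper, one has
`γ* ψ = (B/ρ)² φ` on `[0,B]`, and consequently `φ` is an eigenvector of `γ*γ`
with eigenvalue `(B/ρ)⁴`. -/
theorem stmt_18 (B : ℝ) (hB : 0 < B) (ε : ℝ) (hε : ε = 1 ∨ ε = -1)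
    (ρ : ℝ) (hρ : 0 < ρ) (hcos : cos ρ ≠ 0)
    (hfix : exp ρ = -(1 + ε * sin ρ) / cos ρ)
    (a₁ a₂ a₃ a₄ : ℝ)
    (ha₁ : a₁ = (1 / Real.sqrt B) * (ε / (exp ρ + ε)))
    (ha₂ : a₂ = (1 / Real.sqrt B) * (1 / (1 + ε * exp (-ρ))))
    (ha₃ : a₃ = -(1 / Real.sqrt B))
    (ha₄ : a₄ = (1 / Real.sqrt B) * ((1 - ε * exp (-ρ)) / (1 + ε * exp (-ρ))))
    (φ ψ : ℝ → ℝ)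
    (hφ : ∀ ξ, φ ξ = a₁ * exp (ρ * ξ / B) + a₂ * exp (-(ρ * ξ / B))
        + a₃ * cos (ρ * ξ / B) + a₄ * sin (ρ * ξ / B))
    (hψ : ∀ ξ, ψ ξ = a₁ * exp (ρ * ξ / B) + a₂ * exp (-(ρ * ξ / B))
        - a₃ * cos (ρ * ξ / B) - a₄ * sin (ρ * ξ / B)) :
    (∀ ξ ∈ Icc (0:ℝ) B,
      (∫ x in (0:ℝ)..B, max (ξ - x) 0 * ψ x) = (B / ρ) ^ 2 * φ ξ) ∧
    (∀ ξ ∈ Icc (0:ℝ) B,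
      (∫ u in (0:ℝ)..B, max (ξ - u) 0 * ∫ x in (0:ℝ)..B, max (x - u) 0 * φ x)
        = (B / ρ) ^ 4 * φ ξ) := by
  obtain ⟨hφ₀, hφ'₀, hψB, hψ'B⟩ := boundary_relations hε hρ hcos hfix ha₁ ha₂ ha₃ ha₄
  set c := ρ / B with hc_def
  have hc : c ≠ 0 := div_ne_zero hρ.ne' hB.ne'
  have hcB : c * B = ρ := div_mul_cancel₀ ρ hB.ne'
  have hBρ : (B / ρ) ^ 2 = 1 / c ^ 2 := by rw [hc_def, div_pow, div_pow, one_div_div]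
  have hφc : φ = expTrig c a₁ a₂ a₃ a₄ := funext fun ξ => by
    simp only [hφ, expTrig, mul_div_right_comm, ← hc_def]
  have hψc : ψ = expTrig c a₁ a₂ (-a₃) (-a₄) := funext fun ξ => by
    simp only [hψ, expTrig, mul_div_right_comm, ← hc_def]
    ring
  have hput : ∀ ξ ∈ Icc (0:ℝ) B, ∫ x in (0:ℝ)..B, max (ξ - x) 0 * ψ x = (B / ρ) ^ 2 * φ ξ := by
    intro ξ hξ
    rw [hψc, put_integral_expTrig _ _ _ _ hc hξ, hφc, expTrig_zero, expTrig_zero, hφ₀, hφ'₀, hBρ]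
    ring
  have hcall : ∀ u ∈ Icc (0:ℝ) B, ∫ x in (0:ℝ)..B, max (x - u) 0 * φ x = (B / ρ) ^ 2 * ψ u := by
    intro u hu
    have hγφ := call_integral_expTrig a₁ a₂ (-a₃) (-a₄) hc hu
    simp only [neg_neg] at hγφ
    rw [hφc, hγφ, hψc, hBρ]
    simp only [expTrig, hcB]
    rw [hψB, hψ'B]
    ring
  refine ⟨hput, fun ξ hξ => ?_⟩
  rw [show (B / ρ) ^ 4 = ((B / ρ) ^ 2) ^ 2 by ring]
  exact integral_kernel_comp_eq_sq_mul (K := fun s t => max (s - t) 0) hB.le hcall hput hξ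
end
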